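/- arXiv:math/0403240 — 2 statements merged into one kernel-verified Lean document; each statement's English description precedes it below -/
import Mathlib

section
/- Let χ' : 𝔽_qˣ → kˣ be a character. Let M be a k[Γ]-module and v ∈ M a vector such that u·v = v for all u ∈ U, h·v = χ'(det h)·v for all h ∈ H, and Σ_{λ∈𝔽_q} u_λ·(n_s⁻¹·v) = 0. Then g·v = χ'(det g)·v for all g ∈ Γ. -/
open Matrix

noncomputable section

abbrev GL2 (F : Type) [Field F] := Matrix.GeneralLinearGroup (Fin 2) F

variable (F : Type) [Field F] [Fintype F] (k : Type) [Field k]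

/-- The unipotent upper-triangular matrix `[[1, c], [0, 1]]`. -/
def uElt (c : F) : GL2 F :=
  Matrix.GeneralLinearGroup.mkOfDetNeZero !![1, c; 0, 1] (by simp [Matrix.det_fin_two_of])

/-- The diagonal matrix `[[a, 0], [0, d]]`. -/
def hElt (a d : Fˣ) : GL2 F :=
  Matrix.GeneralLinearGroup.mkOfDetNeZero !![(a : F), 0; 0, (d : F)]
    (by simp [Matrix.det_fin_two_of])

/-- The matrix `n_s = [[0, -1], [1, 0]]`. -/
def nsElt : GL2 F :=
  Matrix.GeneralLinearGroup.mkOfDetNeZero !![0, -1; 1, 0] (by norm_num [Matrix.det_fin_two_of])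

set_option linter.unusedSectionVars false in
lemma uElt_coe (c : F) : (uElt F c : Matrix (Fin 2) (Fin 2) F) = !![1, c; 0, 1] := rfl

set_option linter.unusedSectionVars false in
lemma hElt_coe (a d : Fˣ) :
    (hElt F a d : Matrix (Fin 2) (Fin 2) F) = !![(a : F), 0; 0, (d : F)] := rfl

set_option linter.unusedSectionVars false in
lemma nsElt_coe : (nsElt F : Matrix (Fin 2) (Fin 2) F) = !![0, -1; 1, 0] := rfl

set_option linter.unusedSectionVars false in
lemma ns_sq : nsElt F * nsElt F = hElt F (-1) (-1) := by
  apply Units.ext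
  simp only [Units.val_mul, nsElt_coe, hElt_coe]
  ext i j; fin_cases i <;> fin_cases j <;> simp [Matrix.mul_apply, Fin.sum_univ_two]

set_option linter.unusedSectionVars false in
lemma hneg_sq : hElt F (-1) (-1) * hElt F (-1) (-1) = 1 := by
  apply Units.ext
  simp only [Units.val_mul, hElt_coe, Units.val_one]
  ext i j; fin_cases i <;> fin_cases j <;>
    simp [Matrix.mul_apply, Fin.sum_univ_two, Matrix.one_apply]

set_option linter.unusedSectionVars false in
lemma ns_inv : (nsElt F)⁻¹ = nsElt F * hElt F (-1) (-1) := by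
  rw [inv_eq_of_mul_eq_one_right]
  rw [← mul_assoc, ns_sq, hneg_sq]

set_option linter.unusedSectionVars false in
lemma uElt_zero : uElt F 0 = 1 := by
  apply Units.ext
  simp only [uElt_coe, Units.val_one]
  ext i j; fin_cases i <;> fin_cases j <;> simp [Matrix.one_apply]

set_option linter.unusedSectionVars false in
lemma h_ns_comm (a d : Fˣ) : hElt F a d * nsElt F = nsElt F * hElt F d a := by
  apply Units.ext
  simp only [Units.val_mul, nsElt_coe, hElt_coe]
  ext i j; fin_cases i <;> fin_cases j <;> simp [Matrix.mul_apply, Fin.sum_univ_two]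

set_option linter.unusedSectionVars false in
/-- Bruhat decomposition of an element with nonzero lower-left entry. -/
lemma bruhat (g : GL2 F) (hc : (g : Matrix (Fin 2) (Fin 2) F) 1 0 ≠ 0) :
    g = uElt F ((g : Matrix (Fin 2) (Fin 2) F) 0 0 / (g : Matrix (Fin 2) (Fin 2) F) 1 0) *
      hElt F (Matrix.GeneralLinearGroup.det g * (Units.mk0 _ hc)⁻¹) (Units.mk0 _ hc) *
      nsElt F *
      uElt F ((g : Matrix (Fin 2) (Fin 2) F) 1 1 / (g : Matrix (Fin 2) (Fin 2) F) 1 0) := by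
  apply Units.ext
  simp only [Units.val_mul, uElt_coe, hElt_coe, nsElt_coe, Units.val_inv_eq_inv_val,
    Units.val_mk0, Matrix.GeneralLinearGroup.val_det_apply]
  ext i j
  fin_cases i <;> fin_cases j <;>
    simp [Matrix.mul_apply, Fin.sum_univ_two, Matrix.det_fin_two] <;> field_simp <;> ring

set_option linter.unusedSectionVars false in
lemma upper_dec (g : GL2 F) (hc : (g : Matrix (Fin 2) (Fin 2) F) 1 0 = 0)
    (ha : (g : Matrix (Fin 2) (Fin 2) F) 0 0 ≠ 0) (hd : (g : Matrix (Fin 2) (Fin 2) F) 1 1 ≠ 0) :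
    g = uElt F ((g : Matrix (Fin 2) (Fin 2) F) 0 1 / (g : Matrix (Fin 2) (Fin 2) F) 1 1) *
      hElt F (Units.mk0 _ ha) (Units.mk0 _ hd) := by
  apply Units.ext
  simp only [Units.val_mul, uElt_coe, hElt_coe, Units.val_mk0]
  ext i j
  fin_cases i <;> fin_cases j <;>
    simp [Matrix.mul_apply, Fin.sum_univ_two, hc] <;> field_simp

/-- if `v` is fixed by `U`, the diagonal torus acts on `v` through `χ' ∘ det`, and
`∑_{λ ∈ 𝔽_q} u_λ • (n_s⁻¹ • v) = 0`, then the whole group `Γ = GL₂(𝔽_q)` acts on `v` through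
the character `χ' ∘ det`. -/
theorem stmt_2 (p n : ℕ) [Fact p.Prime] (hn : 1 ≤ n) (hF : Fintype.card F = p ^ n)
    [IsAlgClosed k] [CharP k p]
    (χ' : Fˣ →* kˣ)
    (M : Type) [AddCommGroup M] [Module k M]
    (ρ : Representation k (GL2 F) M) (v : M)
    (hU : ∀ c : F, ρ (uElt F c) v = v)
    (hH : ∀ a d : Fˣ, ρ (hElt F a d) v = (χ' (a * d) : k) • v)
    (hsum : ∑ c : F, ρ (uElt F c) (ρ ((nsElt F)⁻¹) v) = 0) :
    ∀ g : GL2 F, ρ g v = (χ' (Matrix.GeneralLinearGroup.det g) : k) • v := by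

  classical
  set w := ρ (nsElt F) v with hw_def
  -- ρ(ns⁻¹) v = w
  have hwinv : ρ ((nsElt F)⁻¹) v = w := by
    rw [ns_inv, _root_.map_mul, Module.End.mul_apply, hH (-1) (-1)]
    simp [hw_def]
  have hsum' : ∑ c : F, ρ (uElt F c) w = 0 := by
    rw [← hwinv]; exact hsum
  -- key: action on v of an element with nonzero lower-left entry
  have key : ∀ (g : GL2 F) (hc : (g : Matrix (Fin 2) (Fin 2) F) 1 0 ≠ 0),
      ρ g v = (χ' (Matrix.GeneralLinearGroup.det g) : k) •
        ρ (uElt F ((g : Matrix (Fin 2) (Fin 2) F) 0 0 / (g : Matrix (Fin 2) (Fin 2) F) 1 0)) w := by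
    intro g hc
    conv_lhs => rw [bruhat F g hc]
    rw [_root_.map_mul, Module.End.mul_apply, hU, mul_assoc, h_ns_comm, _root_.map_mul,
      Module.End.mul_apply, _root_.map_mul, Module.End.mul_apply, hH, LinearMap.map_smul,
      LinearMap.map_smul]
    congr 3
    rw [mul_comm, mul_assoc, inv_mul_cancel, mul_one]
  -- compute ns * u_c * ns
  have hmat : ∀ c : F, ((nsElt F * uElt F c * nsElt F : GL2 F) : Matrix (Fin 2) (Fin 2) F)
      = !![-1, 0; c, -1] := by
    intro c
    simp only [Units.val_mul, uElt_coe, nsElt_coe]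
    ext i j; fin_cases i <;> fin_cases j <;> simp [Matrix.mul_apply, Fin.sum_univ_two]
  have hdet1 : ∀ c : F, Matrix.GeneralLinearGroup.det (nsElt F * uElt F c * nsElt F) = 1 := by
    intro c
    apply Units.ext
    rw [Matrix.GeneralLinearGroup.val_det_apply, hmat]
    simp [Matrix.det_fin_two_of]
  -- ∑_c ρ(ns u_c ns) v = 0
  have h2 : ∑ c : F, ρ (nsElt F * uElt F c * nsElt F) v = 0 := by
    have := congrArg (ρ (nsElt F)) hsum'
    rw [map_sum, map_zero] at this
    rw [← this]
    refine Finset.sum_congr rfl fun c _ => ?_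
    rw [_root_.map_mul, _root_.map_mul, Module.End.mul_apply, Module.End.mul_apply]
  -- split the sum
  have hterm : ∀ c : F, c ≠ 0 → ρ (nsElt F * uElt F c * nsElt F) v = ρ (uElt F (-c⁻¹)) w := by
    intro c hc0
    have hc : ((nsElt F * uElt F c * nsElt F : GL2 F) : Matrix (Fin 2) (Fin 2) F) 1 0 ≠ 0 := by
      rw [hmat]; simpa using hc0
    rw [key _ hc, hdet1]
    have e00 : ((nsElt F * uElt F c * nsElt F : GL2 F) : Matrix (Fin 2) (Fin 2) F) 0 0 = -1 := by
      rw [hmat]; simp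
    have e10 : ((nsElt F * uElt F c * nsElt F : GL2 F) : Matrix (Fin 2) (Fin 2) F) 1 0 = c := by
      rw [hmat]; simp
    rw [e00, e10]
    simp [neg_div, one_div]
  have hf0 : ρ (nsElt F * uElt F 0 * nsElt F) v = v := by
    rw [uElt_zero, mul_one, ns_sq, hH]
    simp
  have hsplit : ρ (nsElt F * uElt F 0 * nsElt F) v
      + ∑ c ∈ Finset.univ.erase (0 : F), ρ (nsElt F * uElt F c * nsElt F) v = 0 := by
    exact (Finset.add_sum_erase _ (fun c => ρ (nsElt F * uElt F c * nsElt F) v)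
      (Finset.mem_univ (0 : F))).trans h2
  have hrest : ∑ c ∈ Finset.univ.erase (0 : F), ρ (nsElt F * uElt F c * nsElt F) v = -w := by
    calc ∑ c ∈ Finset.univ.erase (0 : F), ρ (nsElt F * uElt F c * nsElt F) v
        = ∑ c ∈ Finset.univ.erase (0 : F), ρ (uElt F (-c⁻¹)) w := by
          refine Finset.sum_congr rfl fun c hcm => ?_
          exact hterm c (Finset.ne_of_mem_erase hcm)
      _ = ∑ d ∈ Finset.univ.erase (0 : F), ρ (uElt F d) w := by
          refine Finset.sum_nbij' (fun c => -c⁻¹) (fun d => -d⁻¹) ?_ ?_ ?_ ?_ ?_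
          · intro a ha
            simp only [Finset.mem_erase, Finset.mem_univ, and_true] at ha ⊢
            simpa using ha
          · intro a ha
            simp only [Finset.mem_erase, Finset.mem_univ, and_true] at ha ⊢
            simpa using ha
          · intro a _; simp [inv_neg]
          · intro a _; simp [inv_neg]
          · intro a _; rfl
      _ = (∑ d : F, ρ (uElt F d) w) - ρ (uElt F 0) w := by
          rw [Finset.sum_erase_eq_sub (Finset.mem_univ (0 : F))]
      _ = -w := by rw [hsum', uElt_zero, _root_.map_one, Module.End.one_apply, zero_sub]
  have hwv : w = v := by
    rw [hf0, hrest, add_neg_eq_zero] at hsplit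
    exact hsplit.symm
  intro g
  by_cases h0 : (g : Matrix (Fin 2) (Fin 2) F) 1 0 = 0
  · have hdet : ((g : Matrix (Fin 2) (Fin 2) F)).det ≠ 0 := by
      have := (Matrix.GeneralLinearGroup.det g).ne_zero
      rwa [Matrix.GeneralLinearGroup.val_det_apply] at this
    rw [Matrix.det_fin_two, h0, mul_zero, sub_zero] at hdet
    have ha := left_ne_zero_of_mul hdet
    have hd := right_ne_zero_of_mul hdet
    have hu : Units.mk0 _ ha * Units.mk0 _ hd = Matrix.GeneralLinearGroup.det g := by
      apply Units.ext
      simp [Matrix.GeneralLinearGroup.val_det_apply, Matrix.det_fin_two, h0]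
    conv_lhs => rw [upper_dec F g h0 ha hd]
    rw [_root_.map_mul, Module.End.mul_apply, hH, LinearMap.map_smul, hU, hu]
  · rw [key g h0, hwv, hU]


end
end

section
/- Fix a field embedding ι : 𝔽_q ↪ k. Let χ : H → kˣ be a character, let a be the unique integer with 1 ≤ a ≤ q−1 and χ(diag(1,λ)) = ι(λ)^a for all λ ∈ 𝔽_qˣ, and let r be the unique integer with 1 ≤ r ≤ q−1 and χ(diag(λ,λ⁻¹)) = ι(λ)^r for all λ ∈ 𝔽_qˣ. Assume r ≠ q−1 (equivalently χ ≠ χ^s), and write r = r_0 + r_1·p + ⋯ + r_{n−1}·p^{n−1} with 0 ≤ r_i ≤ p−1. Then Im(T_{n_s} : Ind_B^Γ χ → Ind_B^Γ χ^s) is isomorphic as a k[Γ]-module to (⨂_{i=0}^{n−1} V_{r_i}^{Fr^i}) ⊗ det^a. -/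
open Matrix TensorProduct

set_option linter.unusedSectionVars false

set_option synthInstance.maxHeartbeats 4000000
set_option maxHeartbeats 4000000

noncomputable section

variable (F : Type) [Field F] [Fintype F] (k : Type) [Field k]

variable (ι : F →+* k)

/-- The linear substitution attached to `g ∈ GL₂(𝔽_q)`:
`X = X 0 ↦ ι(a) X + ι(c) Y` and `Y = X 1 ↦ ι(b) X + ι(d) Y` for `g = [[a,b],[c,d]]`. -/
def subMat (g : GL2 F) : Fin 2 → MvPolynomial (Fin 2) k := fun j =>
  ∑ i : Fin 2, MvPolynomial.C (ι ((g : Matrix (Fin 2) (Fin 2) F) i j)) * MvPolynomial.X i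

lemma subMat_one : subMat F k ι 1 = MvPolynomial.X := by
  funext j
  fin_cases j <;>
    simp [subMat, Fin.sum_univ_two, Matrix.one_apply]

lemma subMat_mul (g g' : GL2 F) (j : Fin 2) :
    MvPolynomial.aeval (R := k) (subMat F k ι g) (subMat F k ι g' j) =
      subMat F k ι (g * g') j := by
  fin_cases j <;>
    · simp [subMat, Fin.sum_univ_two, Matrix.mul_apply, Units.val_mul, _root_.map_add,
        _root_.map_mul]
      ring

/-- The representation of `Γ = GL₂(𝔽_q)` on polynomials in `X, Y` over `k`, where
`g = [[a,b],[c,d]]` acts by `X ↦ ι(a)X + ι(c)Y`, `Y ↦ ι(b)X + ι(d)Y`. -/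
def polyRep : Representation k (GL2 F) (MvPolynomial (Fin 2) k) where
  toFun g := (MvPolynomial.aeval (subMat F k ι g)).toLinearMap
  map_one' := by
    refine LinearMap.ext fun f => ?_
    simp [subMat_one, MvPolynomial.aeval_X_left]
  map_mul' g g' := by
    refine LinearMap.ext fun f => ?_
    have h : (MvPolynomial.aeval (R := k) (subMat F k ι g)).comp
        (MvPolynomial.aeval (subMat F k ι g')) =
        MvPolynomial.aeval (subMat F k ι (g * g')) := by
      rw [MvPolynomial.comp_aeval]
      congr 1
      funext j
      exact subMat_mul F k ι g g' j
    calc MvPolynomial.aeval (subMat F k ι (g * g')) f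
        = ((MvPolynomial.aeval (R := k) (subMat F k ι g)).comp
            (MvPolynomial.aeval (subMat F k ι g'))) f := by rw [h]
      _ = _ := rfl

/-- `V_d`, the space of homogeneous polynomials of degree `d` in `X, Y` over `k`. -/
abbrev Vd (d : ℕ) : Submodule k (MvPolynomial (Fin 2) k) :=
  MvPolynomial.homogeneousSubmodule (Fin 2) k d

lemma subMat_isHomogeneous (g : GL2 F) (j : Fin 2) :
    (subMat F k ι g j).IsHomogeneous 1 := by
  unfold subMat
  rw [Fin.sum_univ_two]
  exact ((MvPolynomial.isHomogeneous_X k 0).C_mul _).add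
    ((MvPolynomial.isHomogeneous_X k 1).C_mul _)

lemma polyRep_stab (g : GL2 F) (d : ℕ) :
    ∀ f ∈ Vd k d, polyRep F k ι g f ∈ Vd k d := by
  intro f hf
  rw [MvPolynomial.mem_homogeneousSubmodule] at hf ⊢
  simpa [polyRep] using hf.aeval (g := subMat F k ι g) (n := 1)
    (fun j => subMat_isHomogeneous F k ι g j)

/-- The representation of `Γ = GL₂(𝔽_q)` on `V_d`. -/
def VdRep (d : ℕ) : Representation k (GL2 F) (Vd k d) where
  toFun g := (polyRep F k ι g).restrict (polyRep_stab F k ι g d)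
  map_one' := by
    refine LinearMap.ext fun x => Subtype.ext ?_
    simp [LinearMap.restrict_apply]
  map_mul' g g' := by
    refine LinearMap.ext fun x => Subtype.ext ?_
    simp [LinearMap.restrict_apply]

/-- The divided-power basis vector `m_i = C(d, i) X^{d-i} Y^i` of `V_d`
(zero when `i > d`). -/
def mItem (d i : ℕ) : MvPolynomial (Fin 2) k :=
  MvPolynomial.C (d.choose i : k) * (MvPolynomial.X 0 ^ (d - i) * MvPolynomial.X 1 ^ i)

lemma mItem_mem (d i : ℕ) : mItem k d i ∈ Vd k d := by
  rw [MvPolynomial.mem_homogeneousSubmodule]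
  by_cases h : i ≤ d
  · have : (MvPolynomial.X (0 : Fin 2) ^ (d - i) * MvPolynomial.X 1 ^ i :
        MvPolynomial (Fin 2) k).IsHomogeneous d := by
      have := ((MvPolynomial.isHomogeneous_X k (0 : Fin 2)).pow (d - i)).mul
        ((MvPolynomial.isHomogeneous_X k (1 : Fin 2)).pow i)
      simpa [Nat.sub_add_cancel h] using this
    exact this.C_mul _
  · have : (d.choose i : k) = 0 := by
      rw [Nat.choose_eq_zero_of_lt (Nat.lt_of_not_le h)]
      exact Nat.cast_zero
    simp [mItem, this]
    exact MvPolynomial.isHomogeneous_zero _ _ _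

/-- `m_i` as an element of `V_d`. -/
def mElt (d i : ℕ) : Vd k d := ⟨mItem k d i, mItem_mem k d i⟩

/-- The element `E_i = ∑_{a+b=i} m_a ⊗ m_b` of `V_{d₁} ⊗ V_{d₂}` (the terms with `a > d₁`
or `b > d₂` vanish). -/
def EElt (d₁ d₂ : ℕ) (i : ℕ) : ↥(Vd k d₁) ⊗[k] ↥(Vd k d₂) :=
  ∑ a ∈ Finset.range (i + 1), mElt k d₁ a ⊗ₜ[k] mElt k d₂ (i - a)

/-- The representation of `G` on the `n`-fold tensor product `⨂ᵢ W i` built from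
representations on the factors. -/
def piRep {G : Type} [Group G] {n : ℕ} {W : Fin n → Type} [∀ i, AddCommGroup (W i)]
    [∀ i, Module k (W i)] (ρs : ∀ i, Representation k G (W i)) :
    Representation k G (⨂[k] i, W i) where
  toFun g := PiTensorProduct.map fun i => ρs i g
  map_one' := by
    show PiTensorProduct.map (fun i => ρs i 1) = 1
    have h : (fun i => ρs i 1) = fun i => (LinearMap.id : W i →ₗ[k] W i) := by
      funext i; rw [_root_.map_one]; rfl
    rw [h, PiTensorProduct.map_id]
    rfl
  map_mul' g g' := by
    show PiTensorProduct.map (fun i => ρs i (g * g')) =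
      PiTensorProduct.map (fun i => ρs i g) * PiTensorProduct.map (fun i => ρs i g')
    have h : (fun i => ρs i (g * g')) = fun i => (ρs i g) ∘ₗ (ρs i g') := by
      funext i; rw [_root_.map_mul]; rfl
    rw [h, PiTensorProduct.map_comp]
    rfl

/-- The `j`-th power of the Frobenius automorphism applied entrywise to `GL₂(𝔽_q)`. -/
def frobGL (p : ℕ) [Fact p.Prime] [CharP F p] (j : ℕ) : GL2 F →* GL2 F :=
  haveI : ExpChar F p := ExpChar.prime Fact.out
  Matrix.GeneralLinearGroup.map (iterateFrobenius F p j)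

/-- The upper-triangular matrix `[[a, c], [0, d]]`. -/
def bElt (a d : Fˣ) (c : F) : GL2 F :=
  Matrix.GeneralLinearGroup.mkOfDetNeZero !![(a : F), c; 0, (d : F)]
    (by simp [Matrix.det_fin_two_of])

/-- The right-translation representation of `GL₂(F)` on the space of `k`-valued functions. -/
def rt : Representation k (GL2 F) (GL2 F → k) where
  toFun g :=
    { toFun := fun f x => f (x * g)
      map_add' := fun _ _ => rfl
      map_smul' := fun _ _ => rfl }
  map_one' := by ext f x; simp
  map_mul' g g' := by ext f x; simp [mul_assoc]

/-- `χ^s`, the character obtained from `χ` by swapping the two diagonal entries. -/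
def swapChar (χ : (Fˣ × Fˣ) →* kˣ) : (Fˣ × Fˣ) →* kˣ where
  toFun x := χ (x.2, x.1)
  map_one' := by exact χ.map_one
  map_mul' x y := by rw [← _root_.map_mul]; rfl

/-- The induced representation `Ind_B^Γ χ` as a subspace of the space of functions `Γ → k`. -/
def Ind (χ : (Fˣ × Fˣ) →* kˣ) : Submodule k (GL2 F → k) where
  carrier := {f | ∀ (a d : Fˣ) (c : F) (g : GL2 F), f (bElt F a d c * g) = (χ (a, d) : k) * f g}
  add_mem' := by
    intro f1 f2 h1 h2 a d c g
    simp only [Pi.add_apply, h1 a d c g, h2 a d c g]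
    ring
  zero_mem' := by intro a d c g; simp
  smul_mem' := by
    intro t f hf a d c g
    simp only [Pi.smul_apply, smul_eq_mul, hf a d c g]
    ring

/-- The Hecke operator `T_{n_s}`. -/
def heckeT : (GL2 F → k) →ₗ[k] (GL2 F → k) where
  toFun f x := ∑ c : F, f ((nsElt F)⁻¹ * uElt F c * x)
  map_add' f g := by funext x; simp [Finset.sum_add_distrib]
  map_smul' t f := by funext x; simp [Finset.mul_sum]

variable (p : ℕ) [Fact p.Prime] [CharP F p] {n : ℕ}

/-- The representation of `Γ` on `⨂ᵢ V_{rᵢ}^{Fr^i}`. -/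
def targetRep (r : Fin n → ℕ) :
    Representation k (GL2 F) (⨂[k] i : Fin n, ↥(Vd k (r i))) :=
  piRep k fun i => ((VdRep F k ι (r i)).comp (frobGL F p i))

set_option linter.unreachableTactic false
set_option linter.unnecessarySeqFocus false
set_option linter.unusedTactic false

namespace S17

open MvPolynomial Finset

section Helpers

variable (F : Type) [Field F] [Fintype F] (k : Type) [Field k] (ι : F →+* k)
  (p : ℕ) [Fact p.Prime] [CharP F p] [CharP k p] {n : ℕ}

/-! ### Matrix entry lemmas -/

lemma uElt_val (c : F) : (uElt F c : Matrix (Fin 2) (Fin 2) F) = !![1, c; 0, 1] := rfl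

lemma nsElt_val : (nsElt F : Matrix (Fin 2) (Fin 2) F) = !![0, -1; 1, 0] := rfl

lemma bElt_val (a d : Fˣ) (c : F) :
    (bElt F a d c : Matrix (Fin 2) (Fin 2) F) = !![(a : F), c; 0, (d : F)] := rfl

lemma det_ne_zero (g : GL2 F) : ((g : Matrix (Fin 2) (Fin 2) F)).det ≠ 0 := by
  have h : ((g : Matrix (Fin 2) (Fin 2) F)).det *
      ((↑g⁻¹ : Matrix (Fin 2) (Fin 2) F)).det = 1 := by
    rw [← Matrix.det_mul, ← Matrix.GeneralLinearGroup.coe_mul, mul_inv_cancel,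
      Matrix.GeneralLinearGroup.coe_one, Matrix.det_one]
  exact left_ne_zero_of_mul_eq_one h

/-! ### Group identities -/

lemma ns_inv : (nsElt F)⁻¹ = bElt F (-1) (-1) 0 * nsElt F := by
  refine inv_eq_of_mul_eq_one_right ?_
  apply Matrix.GeneralLinearGroup.ext
  intro i j
  fin_cases i <;> fin_cases j <;>
    simp [Units.val_mul, uElt_val, nsElt_val, bElt_val, Matrix.mul_apply, Fin.sum_univ_two]

lemma u_zero : uElt F 0 = 1 := by
  apply Matrix.GeneralLinearGroup.ext
  intro i j
  fin_cases i <;> fin_cases j <;>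
    simp [uElt_val, Matrix.one_apply]

lemma ns_ns_u (μ : F) :
    nsElt F * (uElt F 0 * (nsElt F * uElt F μ)) = bElt F (-1) (-1) (-μ) * 1 := by
  apply Matrix.GeneralLinearGroup.ext
  intro i j
  fin_cases i <;> fin_cases j <;>
    simp [Units.val_mul, uElt_val, nsElt_val, bElt_val, Matrix.mul_apply, Fin.sum_univ_two]

lemma ns_u_ns (lam μ : F) (h : lam ≠ 0) :
    nsElt F * (uElt F lam * (nsElt F * uElt F μ)) =
      bElt F (Units.mk0 lam h)⁻¹ (Units.mk0 lam h) (-1) * (nsElt F * uElt F (μ - lam⁻¹)) := by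
  apply Matrix.GeneralLinearGroup.ext
  intro i j
  fin_cases i <;> fin_cases j <;>
    simp [Units.val_mul, uElt_val, nsElt_val, bElt_val, Matrix.mul_apply, Fin.sum_univ_two] <;>
    (try field_simp) <;> (try ring)

lemma ns_u_b (lam : F) (a d : Fˣ) (c : F) (x : GL2 F) :
    nsElt F * (uElt F lam * (bElt F a d c * x)) =
      bElt F d a 0 * (nsElt F * (uElt F ((c + lam * d) * (a : F)⁻¹) * x)) := by
  have key : nsElt F * (uElt F lam * bElt F a d c) =
      bElt F d a 0 * (nsElt F * uElt F ((c + lam * d) * (a : F)⁻¹)) := by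
    apply Matrix.GeneralLinearGroup.ext
    intro i j
    have ha : (a : F) ≠ 0 := a.ne_zero
    fin_cases i <;> fin_cases j <;>
      simp [Units.val_mul, uElt_val, nsElt_val, bElt_val, Matrix.mul_apply, Fin.sum_univ_two] <;>
      (try field_simp) <;> (try ring)
  calc nsElt F * (uElt F lam * (bElt F a d c * x))
      = nsElt F * (uElt F lam * bElt F a d c) * x := by simp [mul_assoc]
    _ = bElt F d a 0 * (nsElt F * uElt F ((c + lam * d) * (a : F)⁻¹)) * x := by rw [key]
    _ = _ := by simp [mul_assoc]

lemma w_val (μ : F) :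
    ((nsElt F * uElt F μ : GL2 F) : Matrix (Fin 2) (Fin 2) F) = !![0, -1; 1, μ] := by
  have : ((nsElt F * uElt F μ : GL2 F) : Matrix (Fin 2) (Fin 2) F) =
      (nsElt F : Matrix (Fin 2) (Fin 2) F) * (uElt F μ : Matrix (Fin 2) (Fin 2) F) := rfl
  rw [this, uElt_val, nsElt_val]
  ext i j
  fin_cases i <;> fin_cases j <;> simp [Matrix.mul_apply, Fin.sum_univ_two]

lemma bg_row (a d : Fˣ) (c : F) (g : GL2 F) (j : Fin 2) :
    ((bElt F a d c * g : GL2 F) : Matrix (Fin 2) (Fin 2) F) 1 j =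
      (d : F) * ((g : GL2 F) : Matrix (Fin 2) (Fin 2) F) 1 j := by
  have : ((bElt F a d c * g : GL2 F) : Matrix (Fin 2) (Fin 2) F) =
      (bElt F a d c : Matrix (Fin 2) (Fin 2) F) * (g : Matrix (Fin 2) (Fin 2) F) := rfl
  rw [this, bElt_val]
  simp [Matrix.mul_apply, Fin.sum_univ_two]

lemma bg_det (a d : Fˣ) (c : F) (g : GL2 F) :
    ((bElt F a d c * g : GL2 F) : Matrix (Fin 2) (Fin 2) F).det =
      (a : F) * ((d : F) * ((g : Matrix (Fin 2) (Fin 2) F)).det) := by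
  have : ((bElt F a d c * g : GL2 F) : Matrix (Fin 2) (Fin 2) F) =
      (bElt F a d c : Matrix (Fin 2) (Fin 2) F) * (g : Matrix (Fin 2) (Fin 2) F) := rfl
  rw [this, Matrix.det_mul, bElt_val, Matrix.det_fin_two_of]
  ring

/-- Bruhat decomposition: two functions satisfying the same `B`-cocycle that agree at `1`
and at all `n_s u_μ` agree everywhere. -/
lemma bruhat_ext (f1 f2 : GL2 F → k) (c : Fˣ → Fˣ → k)
    (h1 : ∀ (a d : Fˣ) (cc : F) (g : GL2 F), f1 (bElt F a d cc * g) = c a d * f1 g)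
    (h2 : ∀ (a d : Fˣ) (cc : F) (g : GL2 F), f2 (bElt F a d cc * g) = c a d * f2 g)
    (e1 : f1 1 = f2 1) (ew : ∀ μ : F, f1 (nsElt F * uElt F μ) = f2 (nsElt F * uElt F μ)) :
    f1 = f2 := by
  funext g
  set M : Matrix (Fin 2) (Fin 2) F := (g : Matrix (Fin 2) (Fin 2) F) with hM
  have hdet : M.det ≠ 0 := det_ne_zero F g
  have hdet2 : M.det = M 0 0 * M 1 1 - M 0 1 * M 1 0 := Matrix.det_fin_two M
  by_cases hc : M 1 0 = 0
  · have hA : M 0 0 ≠ 0 := fun h => hdet (by rw [hdet2, h, hc]; ring)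
    have hD : M 1 1 ≠ 0 := fun h => hdet (by rw [hdet2, h, hc]; ring)
    have hg : g = bElt F (Units.mk0 (M 0 0) hA) (Units.mk0 (M 1 1) hD) (M 0 1) * 1 := by
      apply Matrix.GeneralLinearGroup.ext
      intro i j
      have : ((bElt F (Units.mk0 (M 0 0) hA) (Units.mk0 (M 1 1) hD) (M 0 1) * 1 : GL2 F) :
          Matrix (Fin 2) (Fin 2) F) = !![M 0 0, M 0 1; 0, M 1 1] := by
        rw [mul_one]; exact bElt_val F _ _ _
      rw [this]
      fin_cases i <;> fin_cases j <;> simp [← hM, hc]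
    rw [hg, h1, h2, e1]
  · have hα : M.det * (M 1 0)⁻¹ ≠ 0 := mul_ne_zero hdet (inv_ne_zero hc)
    have hg : g = bElt F (Units.mk0 (M.det * (M 1 0)⁻¹) hα) (Units.mk0 (M 1 0) hc) (M 0 0) *
        (nsElt F * uElt F (M 1 1 * (M 1 0)⁻¹)) := by
      apply Matrix.GeneralLinearGroup.ext
      intro i j
      have hrhs : ((bElt F (Units.mk0 (M.det * (M 1 0)⁻¹) hα) (Units.mk0 (M 1 0) hc) (M 0 0) *
          (nsElt F * uElt F (M 1 1 * (M 1 0)⁻¹)) : GL2 F) : Matrix (Fin 2) (Fin 2) F) =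
          (!![M.det * (M 1 0)⁻¹, M 0 0; 0, M 1 0] : Matrix (Fin 2) (Fin 2) F) *
            !![0, -1; 1, M 1 1 * (M 1 0)⁻¹] := by
        show (bElt F _ _ _ : Matrix (Fin 2) (Fin 2) F) *
          ((nsElt F * uElt F _ : GL2 F) : Matrix (Fin 2) (Fin 2) F) = _
        rw [bElt_val, w_val]
        norm_num
      rw [hrhs]
      fin_cases i <;> fin_cases j <;>
        simp [← hM, Matrix.mul_apply, Fin.sum_univ_two] <;>
        (try field_simp) <;> (try rw [hdet2]) <;> (try ring)
    rw [hg, h1, h2, ew]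

/-! ### Hecke operator computations -/

lemma heckeT_Ind_apply (χ : (Fˣ × Fˣ) →* kˣ) (f : GL2 F → k) (hf : f ∈ Ind F k χ) (x : GL2 F) :
    heckeT F k f x = (χ (-1, -1) : k) * ∑ lam : F, f (nsElt F * (uElt F lam * x)) := by
  have : heckeT F k f x = ∑ lam : F, f ((nsElt F)⁻¹ * uElt F lam * x) := rfl
  rw [this, Finset.mul_sum]
  refine Finset.sum_congr rfl fun lam _ => ?_
  have : (nsElt F)⁻¹ * uElt F lam * x = bElt F (-1) (-1) 0 * (nsElt F * (uElt F lam * x)) := by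
    rw [ns_inv]; simp [mul_assoc]
  rw [this, hf]

lemma chi_neg_one_sq (χ : (Fˣ × Fˣ) →* kˣ) :
    (χ (-1, -1) : k) * (χ (-1, -1) : k) = 1 := by
  rw [← Units.val_mul, ← _root_.map_mul]
  have : ((-1, -1) : Fˣ × Fˣ) * (-1, -1) = 1 := by
    simp [Prod.ext_iff]
  rw [this, map_one χ, Units.val_one]

lemma heckeT_Ind_one (χ : (Fˣ × Fˣ) →* kˣ) (f : GL2 F → k) (hf : f ∈ Ind F k χ) :
    heckeT F k f 1 = (χ (-1, -1) : k) * ∑ s : F, f (nsElt F * uElt F s) := by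
  rw [heckeT_Ind_apply F k χ f hf]
  simp

lemma heckeT_Ind_w (χ : (Fˣ × Fˣ) →* kˣ) (rr : ℕ) (hrr1 : 1 ≤ rr)
    (hχr : ∀ lam : Fˣ, (χ (lam, lam⁻¹) : k) = ι (lam : F) ^ rr)
    (f : GL2 F → k) (hf : f ∈ Ind F k χ) (μ : F) :
    heckeT F k f (nsElt F * uElt F μ) =
      f 1 + ∑ s : F, ι (s - μ) ^ rr * f (nsElt F * uElt F s) := by
  classical
  rw [heckeT_Ind_apply F k χ f hf]
  rw [← Finset.add_sum_erase _ _ (Finset.mem_univ (0 : F))]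
  have h0 : f (nsElt F * (uElt F 0 * (nsElt F * uElt F μ))) = (χ (-1, -1) : k) * f 1 := by
    rw [ns_ns_u, hf]
  have hrest : ∀ lam ∈ Finset.univ.erase (0 : F),
      f (nsElt F * (uElt F lam * (nsElt F * uElt F μ))) =
        (χ (-1, -1) : k)⁻¹ * (ι (-lam⁻¹) ^ rr * f (nsElt F * uElt F (μ - lam⁻¹))) := by
    intro lam hlam
    have hl : lam ≠ 0 := Finset.ne_of_mem_erase hlam
    rw [ns_u_ns F lam μ hl, hf]
    have hval : (χ (-1, -1) : k) * (χ ((Units.mk0 lam hl)⁻¹, Units.mk0 lam hl) : k) =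
        ι (-lam⁻¹) ^ rr := by
      rw [← Units.val_mul, ← _root_.map_mul]
      have : ((-1, -1) : Fˣ × Fˣ) * ((Units.mk0 lam hl)⁻¹, Units.mk0 lam hl) =
          (-(Units.mk0 lam hl)⁻¹, (-(Units.mk0 lam hl)⁻¹)⁻¹) := by
        simp [Prod.ext_iff]
      rw [this, hχr]
      try norm_num
    calc (χ ((Units.mk0 lam hl)⁻¹, Units.mk0 lam hl) : k) * f (nsElt F * uElt F (μ - lam⁻¹))
        = (χ (-1, -1) : k)⁻¹ * ((χ (-1, -1) : k) *
            (χ ((Units.mk0 lam hl)⁻¹, Units.mk0 lam hl) : k) * f (nsElt F * uElt F (μ - lam⁻¹))) := by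
          have hne : (χ (-1, -1) : k) ≠ 0 := Units.ne_zero _
          field_simp
      _ = _ := by rw [hval]; try ring
  rw [Finset.sum_congr rfl hrest, h0, mul_add, ← mul_assoc, chi_neg_one_sq, one_mul]
  congr 1
  have hne : (χ (-1, -1) : k) ≠ 0 := Units.ne_zero _
  rw [Finset.mul_sum]
  trans ∑ lam ∈ Finset.univ.erase (0 : F), ι (-lam⁻¹) ^ rr * f (nsElt F * uElt F (μ - lam⁻¹))
  · exact Finset.sum_congr rfl fun lam _ => by rw [mul_inv_cancel_left₀ hne]
  rw [← Finset.add_sum_erase _ _ (Finset.mem_univ (μ : F))]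
  have hz : ι (μ - μ) ^ rr * f (nsElt F * uElt F μ) = 0 := by
    rw [sub_self, map_zero, zero_pow (by omega), zero_mul]
  rw [hz, zero_add]
  refine Finset.sum_bij' (fun lam _ => μ - lam⁻¹) (fun s _ => (μ - s)⁻¹) ?_ ?_ ?_ ?_ ?_
  · intro lam hlam
    have hl : lam ≠ 0 := Finset.ne_of_mem_erase hlam
    simp only [Finset.mem_erase, Finset.mem_univ, and_true]
    intro h
    exact inv_ne_zero hl (by linear_combination -h)
  · intro s hs
    have hs' : s ≠ μ := Finset.ne_of_mem_erase hs
    simp only [Finset.mem_erase, Finset.mem_univ, and_true]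
    exact inv_ne_zero (sub_ne_zero_of_ne (Ne.symm hs'))
  · intro lam hlam
    have hl : lam ≠ 0 := Finset.ne_of_mem_erase hlam
    field_simp
    ring
  · intro s hs
    have hs' : s ≠ μ := Finset.ne_of_mem_erase hs
    have : μ - s ≠ 0 := sub_ne_zero_of_ne (Ne.symm hs')
    field_simp
    ring
  · intro lam hlam
    have : -lam⁻¹ = (μ - lam⁻¹) - μ := by ring
    rw [this]

lemma heckeT_Ind_cocycle (χ : (Fˣ × Fˣ) →* kˣ) (f : GL2 F → k) (hf : f ∈ Ind F k χ)
    (a d : Fˣ) (c : F) (x : GL2 F) :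
    heckeT F k f (bElt F a d c * x) = (χ (d, a) : k) * heckeT F k f x := by
  classical
  rw [heckeT_Ind_apply F k χ f hf, heckeT_Ind_apply F k χ f hf]
  conv_rhs => rw [mul_left_comm]
  congr 1
  have ha : (a : F) ≠ 0 := a.ne_zero
  have hd : (d : F) ≠ 0 := d.ne_zero
  rw [Finset.mul_sum]
  refine Finset.sum_bij' (fun lam _ => (c + lam * d) * (a : F)⁻¹)
    (fun s _ => (s * a - c) * (d : F)⁻¹) (fun _ _ => Finset.mem_univ _)
    (fun _ _ => Finset.mem_univ _) ?_ ?_ ?_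
  · intro lam _; field_simp; ring
  · intro s _; field_simp; ring
  · intro lam _
    rw [ns_u_b, hf]

/-! ### Polynomial and tensor layer -/

/-- The exponent of the monomial `X₀^j X₁^(d-j)`. -/
def mexp (d j : ℕ) : Fin 2 →₀ ℕ := Finsupp.single 0 j + Finsupp.single 1 (d - j)

lemma mexp_apply0 (d j : ℕ) : mexp d j 0 = j := by
  simp [mexp, Finsupp.single_apply]

lemma mexp_apply1 (d j : ℕ) : mexp d j 1 = d - j := by
  simp [mexp, Finsupp.single_apply]

/-- The monomial `X₀^j X₁^(d-j)` as element of `Vd k d` (junk value `0` if `j > d`). -/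
def mono (d j : ℕ) : ↥(Vd k d) :=
  ⟨if j ≤ d then MvPolynomial.X 0 ^ j * MvPolynomial.X 1 ^ (d - j) else 0, by
    split_ifs with h
    · rw [MvPolynomial.mem_homogeneousSubmodule]
      have := ((MvPolynomial.isHomogeneous_X k (0 : Fin 2)).pow j).mul
        ((MvPolynomial.isHomogeneous_X k (1 : Fin 2)).pow (d - j))
      simpa [Nat.add_sub_cancel' h] using this
    · exact MvPolynomial.isHomogeneous_zero _ _ _⟩

lemma mono_val (d j : ℕ) (h : j ≤ d) :
    ((mono k d j : ↥(Vd k d)) : MvPolynomial (Fin 2) k) =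
      MvPolynomial.monomial (mexp d j) 1 := by
  simp only [mono, if_pos h, mexp]
  rw [X_pow_eq_monomial, X_pow_eq_monomial, monomial_mul, one_mul]

lemma mono_val' (d j : ℕ) (h : j ≤ d) :
    ((mono k d j : ↥(Vd k d)) : MvPolynomial (Fin 2) k) =
      MvPolynomial.X 0 ^ j * MvPolynomial.X 1 ^ (d - j) := by
  simp [mono, h]

lemma deg2 (m : Fin 2 →₀ ℕ) : m.degree = m 0 + m 1 := by
  rw [Finsupp.degree, ← Fin.sum_univ_two (fun i => m i)]
  exact Finset.sum_subset (Finset.subset_univ _)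
    (fun i _ hi => Finsupp.notMem_support_iff.mp hi)

lemma Vd_repr (d : ℕ) (w : ↥(Vd k d)) :
    w = ∑ j ∈ Finset.range (d + 1),
      MvPolynomial.coeff (mexp d j) (w : MvPolynomial (Fin 2) k) • mono k d j := by
  apply Subtype.ext
  rw [AddSubmonoidClass.coe_finset_sum]
  apply MvPolynomial.ext
  intro m
  rw [MvPolynomial.coeff_sum]
  have hterm : ∀ j ∈ Finset.range (d + 1),
      MvPolynomial.coeff m ((MvPolynomial.coeff (mexp d j) (w : MvPolynomial (Fin 2) k) •
          mono k d j : ↥(Vd k d)) : MvPolynomial (Fin 2) k) =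
        MvPolynomial.coeff (mexp d j) (w : MvPolynomial (Fin 2) k) *
          (if mexp d j = m then 1 else 0) := by
    intro j hj
    rw [SetLike.val_smul, MvPolynomial.coeff_smul,
      mono_val k d j (Nat.lt_succ_iff.mp (Finset.mem_range.mp hj)),
      MvPolynomial.coeff_monomial, smul_eq_mul]
  rw [Finset.sum_congr rfl hterm]
  by_cases hm : m 0 + m 1 = d
  · have hj0 : m 0 ∈ Finset.range (d + 1) := Finset.mem_range.mpr (by omega)
    have hmex : mexp d (m 0) = m := by
      ext i
      fin_cases i
      · show mexp d (m 0) 0 = m 0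
        rw [mexp_apply0]
      · show mexp d (m 0) 1 = m 1
        rw [mexp_apply1]; omega
    rw [Finset.sum_eq_single_of_mem (m 0) hj0]
    · rw [if_pos hmex, mul_one, hmex]
    · intro j hj hne
      rw [if_neg, mul_zero]
      intro h
      exact hne (by rw [← mexp_apply0 d j, h])
  · have hw : MvPolynomial.coeff m (w : MvPolynomial (Fin 2) k) = 0 := by
      have hh := w.2
      rw [MvPolynomial.mem_homogeneousSubmodule] at hh
      exact hh.coeff_eq_zero (by rw [deg2]; omega)
    rw [hw]
    refine (Finset.sum_eq_zero fun j hj => ?_).symm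
    rw [if_neg, mul_zero]
    intro h
    apply hm
    have h0 : m 0 = j := by rw [← h, mexp_apply0]
    have h1 : m 1 = d - j := by rw [← h, mexp_apply1]
    have : j ≤ d := Nat.lt_succ_iff.mp (Finset.mem_range.mp hj)
    omega

/-- Index set for the digit tuples. -/
def Lam (r : Fin n → ℕ) : Finset (Fin n → ℕ) :=
  Fintype.piFinset fun i => Finset.range (r i + 1)

lemma mem_Lam {r l : Fin n → ℕ} : l ∈ Lam r ↔ ∀ i, l i ≤ r i := by
  simp [Lam, Fintype.mem_piFinset, Nat.lt_succ_iff]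

/-- `∑ lᵢ pⁱ`. -/
def mfun (l : Fin n → ℕ) : ℕ := ∑ i, l i * p ^ (i : ℕ)

/-- Basis-type tensors `⨂ᵢ X₀^(lᵢ) X₁^(rᵢ-lᵢ)`. -/
def tl (r l : Fin n → ℕ) : ⨂[k] i : Fin n, ↥(Vd k (r i)) :=
  PiTensorProduct.tprod k fun i => mono k (r i) (l i)

lemma tprod_expand (r : Fin n → ℕ) (P : Π i : Fin n, ↥(Vd k (r i))) :
    PiTensorProduct.tprod k P = ∑ l ∈ Lam r,
      (∏ i, MvPolynomial.coeff (mexp (r i) (l i)) ((P i : MvPolynomial (Fin 2) k))) •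
        tl k r l := by
  have h1 : PiTensorProduct.tprod k P = PiTensorProduct.tprod k (fun i =>
      ∑ j ∈ Finset.range (r i + 1),
        MvPolynomial.coeff (mexp (r i) j) ((P i : MvPolynomial (Fin 2) k)) • mono k (r i) j) := by
    congr 1
    funext i
    exact Vd_repr k (r i) (P i)
  rw [h1, MultilinearMap.map_sum_finset]
  exact Finset.sum_congr rfl fun l hl => MultilinearMap.map_smul_univ _ _ _

lemma span_tl_top (r : Fin n → ℕ) :
    Submodule.span k ((fun l => tl k r l) '' (Lam r : Set (Fin n → ℕ))) = ⊤ := by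
  rw [eq_top_iff, ← PiTensorProduct.span_tprod_eq_top]
  refine Submodule.span_le.2 ?_
  rintro _ ⟨P, rfl⟩
  rw [tprod_expand]
  exact Submodule.sum_mem _ fun l hl => Submodule.smul_mem _ _
    (Submodule.subset_span ⟨l, hl, rfl⟩)

/-- The evaluation point attached to `x` and the `i`-th Frobenius twist. -/
def pt (x : GL2 F) (i : ℕ) : Fin 2 → k :=
  fun j => ι ((x : Matrix (Fin 2) (Fin 2) F) 1 j) ^ p ^ i

def evalL (r : Fin n → ℕ) (i : Fin n) : ↥(Vd k (r i)) →ₗ[k] (GL2 F → k) where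
  toFun P x := MvPolynomial.aeval (pt F k ι p x (i : ℕ)) ((P : MvPolynomial (Fin 2) k))
  map_add' P Q := by funext x; simp
  map_smul' c P := by
    funext x
    simp [SetLike.val_smul, smul_eq_C_mul]

def psiML (r : Fin n → ℕ) :
    MultilinearMap k (fun i : Fin n => ↥(Vd k (r i))) (GL2 F → k) :=
  (MultilinearMap.mkPiAlgebra k (Fin n) (GL2 F → k)).compLinearMap (evalL F k ι p r)

def dmul (A : ℕ) : (GL2 F → k) →ₗ[k] (GL2 F → k) where
  toFun f x := ι ((x : Matrix (Fin 2) (Fin 2) F).det) ^ A * f x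
  map_add' f g := by funext x; simp [mul_add]
  map_smul' c f := by funext x; simp; ring

/-- The main map `ψ : ⨂ᵢ V_(rᵢ) → (Γ → k)`. -/
def psi (A : ℕ) (r : Fin n → ℕ) :
    (⨂[k] i : Fin n, ↥(Vd k (r i))) →ₗ[k] (GL2 F → k) :=
  dmul F k ι A ∘ₗ PiTensorProduct.lift (psiML F k ι p r)

lemma psi_tprod (A : ℕ) (r : Fin n → ℕ) (P : Π i : Fin n, ↥(Vd k (r i))) (x : GL2 F) :
    psi F k ι p A r (PiTensorProduct.tprod k P) x =
      ι ((x : Matrix (Fin 2) (Fin 2) F).det) ^ A *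
        ∏ i : Fin n, MvPolynomial.aeval (pt F k ι p x ((i : Fin n) : ℕ))
          ((P i : MvPolynomial (Fin 2) k)) := by
  simp [psi, dmul, psiML, evalL, PiTensorProduct.lift.tprod,
    MultilinearMap.mkPiAlgebra_apply, Finset.prod_apply]

lemma psi_tl_apply (A : ℕ) (r l : Fin n → ℕ) (hl : ∀ i, l i ≤ r i) (x : GL2 F) :
    psi F k ι p A r (tl k r l) x =
      ι ((x : Matrix (Fin 2) (Fin 2) F).det) ^ A *
        (ι ((x : Matrix (Fin 2) (Fin 2) F) 1 0) ^ mfun p l *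
         ι ((x : Matrix (Fin 2) (Fin 2) F) 1 1) ^ mfun p (fun i => r i - l i)) := by
  rw [tl, psi_tprod]
  congr 1
  have key : ∀ i : Fin n,
      MvPolynomial.aeval (pt F k ι p x (i : ℕ)) ((mono k (r i) (l i) : MvPolynomial (Fin 2) k)) =
        ι ((x : Matrix (Fin 2) (Fin 2) F) 1 0) ^ (l i * p ^ (i : ℕ)) *
          ι ((x : Matrix (Fin 2) (Fin 2) F) 1 1) ^ ((r i - l i) * p ^ (i : ℕ)) := by
    intro i
    rw [mono_val' k _ _ (hl i)]
    simp only [_root_.map_mul, _root_.map_pow, MvPolynomial.aeval_X, pt]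
    rw [← pow_mul, ← pow_mul, mul_comm (p ^ (i : ℕ)) (l i), mul_comm (p ^ (i : ℕ)) (r i - l i)]
  rw [Finset.prod_congr rfl (fun i _ => key i), Finset.prod_mul_distrib,
    Finset.prod_pow_eq_pow_sum, Finset.prod_pow_eq_pow_sum]
  rfl

/-- The pure tensor `⨂ᵢ (ι(s)^(pⁱ) X₀ - X₁)^(rᵢ)`. -/
def Qp (r : Fin n → ℕ) (s : F) (i : Fin n) : ↥(Vd k (r i)) :=
  ⟨(MvPolynomial.C (ι s ^ p ^ (i : ℕ)) * MvPolynomial.X 0 - MvPolynomial.X 1) ^ r i, by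
    rw [MvPolynomial.mem_homogeneousSubmodule]
    have h : ((MvPolynomial.C (ι s ^ p ^ (i : ℕ)) * MvPolynomial.X 0 - MvPolynomial.X 1 :
        MvPolynomial (Fin 2) k)).IsHomogeneous 1 :=
      ((MvPolynomial.isHomogeneous_X k 0).C_mul _).sub (MvPolynomial.isHomogeneous_X k 1)
    simpa using h.pow (r i)⟩

def ws (r : Fin n → ℕ) (s : F) : ⨂[k] i : Fin n, ↥(Vd k (r i)) :=
  PiTensorProduct.tprod k (Qp F k ι p r s)

lemma psi_ws_apply (A : ℕ) (r : Fin n → ℕ) (s : F) (x : GL2 F) :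
    psi F k ι p A r (ws F k ι p r s) x =
      ι ((x : Matrix (Fin 2) (Fin 2) F).det) ^ A *
        ∏ i : Fin n, (ι s ^ p ^ (i : ℕ) * ι ((x : Matrix (Fin 2) (Fin 2) F) 1 0) ^ p ^ (i : ℕ) -
          ι ((x : Matrix (Fin 2) (Fin 2) F) 1 1) ^ p ^ (i : ℕ)) ^ r i := by
  rw [ws, psi_tprod]
  congr 1
  refine Finset.prod_congr rfl fun i _ => ?_
  simp [Qp, pt]

def alphaC (r l : Fin n → ℕ) : k := ∏ i, ((-1 : k) ^ (r i - l i) * ((r i).choose (l i) : k))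

lemma Qp_repr (r : Fin n → ℕ) (s : F) (i : Fin n) :
    Qp F k ι p r s i = ∑ j ∈ Finset.range (r i + 1),
      (ι s ^ (j * p ^ (i : ℕ)) * ((-1 : k) ^ (r i - j) * ((r i).choose j : k))) •
        mono k (r i) j := by
  apply Subtype.ext
  rw [AddSubmonoidClass.coe_finset_sum]
  show (MvPolynomial.C (ι s ^ p ^ (i : ℕ)) * MvPolynomial.X 0 - MvPolynomial.X 1 :
      MvPolynomial (Fin 2) k) ^ r i = _
  rw [sub_eq_add_neg, add_pow]
  refine Finset.sum_congr rfl fun j hj => ?_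
  have hj' : j ≤ r i := Nat.lt_succ_iff.mp (Finset.mem_range.mp hj)
  rw [SetLike.val_smul, smul_eq_C_mul, mono_val' k _ _ hj']
  rw [mul_pow, neg_pow, ← MvPolynomial.C_eq_coe_nat]
  rw [show (ι s ^ (j * p ^ (i : ℕ)) : k) = (ι s ^ p ^ (i : ℕ)) ^ j from by
    rw [← pow_mul, mul_comm]]
  simp only [_root_.map_mul, _root_.map_pow, map_neg, MvPolynomial.C_1, MvPolynomial.C_pow]
  ring

lemma ws_expand (r : Fin n → ℕ) (s : F) :
    ws F k ι p r s = ∑ l ∈ Lam r, (ι s ^ mfun p l * alphaC k r l) • tl k r l := by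
  rw [ws]
  have h1 : Qp F k ι p r s = fun i =>
      ∑ j ∈ Finset.range (r i + 1),
        (ι s ^ (j * p ^ (i : ℕ)) * ((-1 : k) ^ (r i - j) * ((r i).choose j : k))) •
          mono k (r i) j := funext fun i => Qp_repr F k ι p r s i
  rw [h1, MultilinearMap.map_sum_finset]
  refine Finset.sum_congr rfl fun l hl => ?_
  rw [MultilinearMap.map_smul_univ]
  congr 1
  rw [Finset.prod_mul_distrib]
  congr 1
  rw [show mfun p l = ∑ i, l i * p ^ (i : ℕ) from rfl, ← Finset.prod_pow_eq_pow_sum]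

/-! ### Scalar computations -/

lemma powsum (e : ℕ) (he : e ≠ 0) :
    ∑ x : F, ι x ^ e = if (Fintype.card F - 1) ∣ e then (-1 : k) else 0 := by
  classical
  have h1 : ∑ x : F, ι x ^ e = ι (∑ x : F, x ^ e) := by
    rw [map_sum]
    exact Finset.sum_congr rfl fun x _ => (map_pow ι x e).symm
  have h2 : ∑ x : F, x ^ e = ∑ x : Fˣ, ((x : F)) ^ e := by
    rw [← Finset.add_sum_erase _ _ (Finset.mem_univ (0 : F)), zero_pow he, zero_add]
    refine (Finset.sum_bij' (fun (x : Fˣ) _ => (x : F))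
      (fun x hx => Units.mk0 x (Finset.ne_of_mem_erase hx)) ?_ ?_ ?_ ?_ ?_).symm
    · intro x _
      simp [Units.ne_zero]
    · intro x _
      exact Finset.mem_univ _
    · intro x _
      exact Units.ext rfl
    · intro x hx
      rfl
    · intro x _
      rfl
  have h3 : ∑ x : Fˣ, ((x : F)) ^ e = if (Fintype.card F - 1) ∣ e then (-1 : F) else 0 := by
    have := FiniteField.sum_pow_units F e
    simpa [Units.val_pow_eq_pow_val] using this
  rw [h1, h2, h3]
  split_ifs <;> simp

lemma orth (a b : ℕ) (ha : a ≤ Fintype.card F - 2) (hb : b ≤ Fintype.card F - 2) :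
    ∑ x : F, ι x ^ (Fintype.card F - 1 - a + b) = if a = b then (-1 : k) else 0 := by
  have hc : 1 < Fintype.card F := Fintype.one_lt_card
  have he : Fintype.card F - 1 - a + b ≠ 0 := by omega
  rw [powsum F k ι _ he]
  congr 1
  rw [eq_iff_iff]
  constructor
  · rintro ⟨m, hm⟩
    rcases m with _ | _ | m
    · omega
    · omega
    · have h2 : (Fintype.card F - 1) * 2 ≤ (Fintype.card F - 1) * (m + 1 + 1) :=
        Nat.mul_le_mul_left _ (by omega)
      rw [← hm] at h2
      omega
  · rintro rfl
    exact ⟨1, by omega⟩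

lemma digits_inj (hp2 : 2 ≤ p) : ∀ (N : ℕ) (l l' : Fin N → ℕ), (∀ i, l i < p) →
    (∀ i, l' i < p) → (∑ i, l i * p ^ (i : ℕ)) = (∑ i, l' i * p ^ (i : ℕ)) → l = l' := by
  intro N
  induction N with
  | zero => intro l l' _ _ _; funext i; exact i.elim0
  | succ N ih =>
    intro l l' hl hl' hsum
    have expand : ∀ (m : Fin (N + 1) → ℕ),
        (∑ i, m i * p ^ (i : ℕ)) = m 0 + (∑ i : Fin N, m i.succ * p ^ (i : ℕ)) * p := by
      intro m
      rw [Fin.sum_univ_succ, Finset.sum_mul]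
      simp only [Fin.val_zero, pow_zero, mul_one, Fin.val_succ]
      congr 1
      refine Finset.sum_congr rfl fun i _ => ?_
      rw [pow_succ]
      ring
    rw [expand l, expand l'] at hsum
    have h0 : l 0 = l' 0 := by
      have hmod := congrArg (· % p) hsum
      simpa [Nat.add_mul_mod_self_right, Nat.mod_eq_of_lt (hl 0), Nat.mod_eq_of_lt (hl' 0)]
        using hmod
    have htail : (∑ i : Fin N, l i.succ * p ^ (i : ℕ)) = ∑ i : Fin N, l' i.succ * p ^ (i : ℕ) := by
      have hp0 : 0 < p := by omega
      rw [h0] at hsum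
      have := Nat.add_left_cancel hsum
      exact Nat.eq_of_mul_eq_mul_right hp0 this
    have htl := ih (fun i => l i.succ) (fun i => l' i.succ) (fun i => hl _) (fun i => hl' _) htail
    funext i
    refine Fin.cases ?_ ?_ i
    · exact h0
    · intro j
      exact congrFun htl j

lemma mfun_le {r l : Fin n → ℕ} (hl : ∀ i, l i ≤ r i) : mfun p l ≤ mfun p r :=
  Finset.sum_le_sum fun i _ => Nat.mul_le_mul_right _ (hl i)

lemma mfun_sub {r l : Fin n → ℕ} (hl : ∀ i, l i ≤ r i) :
    mfun p (fun i => r i - l i) = mfun p r - mfun p l := by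
  have key : mfun p (fun i => r i - l i) + mfun p l = mfun p r := by
    show (∑ i, (r i - l i) * p ^ (i : ℕ)) + ∑ i, l i * p ^ (i : ℕ) = ∑ i, r i * p ^ (i : ℕ)
    rw [← Finset.sum_add_distrib]
    exact Finset.sum_congr rfl fun i _ => by rw [← add_mul, Nat.sub_add_cancel (hl i)]
  omega

lemma alphaC_ne_zero (r : Fin n → ℕ) (hr : ∀ i, r i ≤ p - 1) (l : Fin n → ℕ)
    (hl : ∀ i, l i ≤ r i) : alphaC k r l ≠ 0 := by
  have hp2 : 2 ≤ p := (Fact.out : p.Prime).two_le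
  refine Finset.prod_ne_zero_iff.mpr fun i _ =>
    mul_ne_zero (pow_ne_zero _ (neg_ne_zero.mpr one_ne_zero)) ?_
  intro h
  rw [CharP.cast_eq_zero_iff k p] at h
  have hfact := Nat.choose_mul_factorial_mul_factorial (hl i)
  have hdvd : p ∣ (r i).factorial := by
    rw [← hfact]
    exact (h.mul_right _).mul_right _
  have h5 := (Nat.Prime.dvd_factorial (Fact.out : p.Prime)).mp hdvd
  have h6 := hr i
  omega

lemma neg_one_pow_mfun (r : Fin n → ℕ) : ((-1 : k)) ^ mfun p r = ∏ i, (-1 : k) ^ r i := by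
  rw [show mfun p r = ∑ i, r i * p ^ (i : ℕ) from rfl, ← Finset.prod_pow_eq_pow_sum]
  refine Finset.prod_congr rfl fun i _ => ?_
  rw [mul_comm (r i) _, pow_mul, neg_one_pow_char_pow k p]

/-! ### The inverse map `E` and spanning families -/

def zvec (r : Fin n → ℕ) (N : ℕ) (μ : F) : ⨂[k] i : Fin n, ↥(Vd k (r i)) :=
  ∑ l ∈ Lam r, ι μ ^ (N + mfun p l) • tl k r l

def EL (r : Fin n → ℕ) (N : ℕ) : (GL2 F → k) →ₗ[k] ⨂[k] i : Fin n, ↥(Vd k (r i)) where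
  toFun f := -∑ μ : F, f (nsElt F * uElt F μ) • zvec F k ι p r N μ
  map_add' f g := by
    simp only [Pi.add_apply, add_smul, Finset.sum_add_distrib, neg_add]
    abel
  map_smul' c f := by
    simp only [Pi.smul_apply, smul_eq_mul, RingHom.id_apply, ← smul_smul, ← Finset.smul_sum,
      ← smul_neg]
    rw [smul_neg]

lemma w_det (μ : F) :
    ((nsElt F * uElt F μ : GL2 F) : Matrix (Fin 2) (Fin 2) F).det = 1 := by
  rw [w_val, Matrix.det_fin_two_of]
  ring

lemma psi_tl_w (A : ℕ) (r l : Fin n → ℕ) (hl : ∀ i, l i ≤ r i) (μ : F) :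
    psi F k ι p A r (tl k r l) (nsElt F * uElt F μ) =
      ι μ ^ mfun p (fun i => r i - l i) := by
  rw [psi_tl_apply F k ι p A r l hl, w_det, w_val]
  norm_num

lemma psi_tl_one (A : ℕ) (r l : Fin n → ℕ) (hl : ∀ i, l i ≤ r i) (hl0 : mfun p l ≠ 0) :
    psi F k ι p A r (tl k r l) 1 = 0 := by
  rw [psi_tl_apply F k ι p A r l hl]
  have h1 : ((1 : GL2 F) : Matrix (Fin 2) (Fin 2) F) = 1 := rfl
  rw [h1]
  simp [Matrix.one_apply, zero_pow hl0]

lemma psi_ws_one (A : ℕ) (r : Fin n → ℕ) (s : F) :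
    psi F k ι p A r (ws F k ι p r s) 1 = ∏ i, (-1 : k) ^ r i := by
  rw [psi_ws_apply]
  have h1 : ((1 : GL2 F) : Matrix (Fin 2) (Fin 2) F) = 1 := rfl
  rw [h1]
  have hp0 : ∀ i : Fin n, p ^ (i : ℕ) ≠ 0 := fun i =>
    pow_ne_zero _ (Nat.Prime.ne_zero Fact.out)
  simp [Matrix.one_apply]
  refine Finset.prod_congr rfl fun i _ => ?_
  rw [zero_pow (hp0 i)]
  norm_num

lemma psi_ws_w (A : ℕ) (r : Fin n → ℕ) (s μ : F) :
    psi F k ι p A r (ws F k ι p r s) (nsElt F * uElt F μ) = ι (s - μ) ^ mfun p r := by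
  rw [psi_ws_apply, w_det, w_val]
  have key : ∀ i : Fin n,
      (ι s ^ p ^ (i : ℕ) * ι ((!![0, -1; 1, μ] : Matrix (Fin 2) (Fin 2) F) 1 0) ^ p ^ (i : ℕ) -
        ι ((!![0, -1; 1, μ] : Matrix (Fin 2) (Fin 2) F) 1 1) ^ p ^ (i : ℕ)) ^ r i =
        ι (s - μ) ^ (p ^ (i : ℕ) * r i) := by
    intro i
    have e0 : (!![(0:F), -1; 1, μ] : Matrix (Fin 2) (Fin 2) F) 1 0 = 1 := rfl
    have e1 : (!![(0:F), -1; 1, μ] : Matrix (Fin 2) (Fin 2) F) 1 1 = μ := rfl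
    rw [e0, e1, _root_.map_one, one_pow, mul_one, ← sub_pow_char_pow (R := k),
      ← map_sub, ← pow_mul]
  rw [Finset.prod_congr rfl fun i _ => key i, Finset.prod_pow_eq_pow_sum]
  rw [_root_.map_one, one_pow, one_mul]
  congr 1
  exact Finset.sum_congr rfl fun i _ => mul_comm _ _

lemma EL_psi_tl (A : ℕ) (r : Fin n → ℕ) (hr : ∀ i, r i ≤ p - 1)
    (hcard : mfun p r ≤ Fintype.card F - 2) (l : Fin n → ℕ) (hl : l ∈ Lam r) :
    EL F k ι p r (Fintype.card F - 1 - mfun p r) (psi F k ι p A r (tl k r l)) = tl k r l := by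
  have hl' : ∀ i, l i ≤ r i := mem_Lam.mp hl
  have hp2 : 2 ≤ p := (Fact.out : p.Prime).two_le
  have hmle : mfun p l ≤ mfun p r := mfun_le p hl'
  have exp_eq : ∀ l' : Fin n → ℕ,
      mfun p (fun i => r i - l i) + (Fintype.card F - 1 - mfun p r + mfun p l') =
        Fintype.card F - 1 - mfun p l + mfun p l' := by
    intro l'
    rw [mfun_sub p hl']
    omega
  have step1 : EL F k ι p r (Fintype.card F - 1 - mfun p r) (psi F k ι p A r (tl k r l)) =
      -∑ μ : F, (ι μ ^ mfun p (fun i => r i - l i)) •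
        zvec F k ι p r (Fintype.card F - 1 - mfun p r) μ := by
    simp only [EL, LinearMap.coe_mk, AddHom.coe_mk]
    congr 1
    exact Finset.sum_congr rfl fun μ _ => by
      rw [psi_tl_w F k ι p A r l hl' μ]
  rw [step1]
  have step2 : ∀ μ : F, (ι μ ^ mfun p (fun i => r i - l i)) •
      zvec F k ι p r (Fintype.card F - 1 - mfun p r) μ =
      ∑ l' ∈ Lam r, (ι μ ^ (mfun p (fun i => r i - l i) +
        (Fintype.card F - 1 - mfun p r + mfun p l'))) • tl k r l' := by
    intro μ
    rw [zvec, Finset.smul_sum]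
    exact Finset.sum_congr rfl fun l' _ => by rw [smul_smul, ← pow_add]
  rw [Finset.sum_congr rfl fun μ _ => step2 μ, Finset.sum_comm]
  have step3 : ∀ l' ∈ Lam r,
      (∑ μ : F, (ι μ ^ (mfun p (fun i => r i - l i) +
        (Fintype.card F - 1 - mfun p r + mfun p l'))) • tl k r l') =
      (if mfun p l = mfun p l' then (-1 : k) else 0) • tl k r l' := by
    intro l' hl''
    rw [← Finset.sum_smul]
    congr 1
    rw [Finset.sum_congr rfl fun μ _ => by rw [exp_eq l']]
    exact orth F k ι (mfun p l) (mfun p l') (le_trans hmle hcard)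
      (le_trans (mfun_le p (mem_Lam.mp hl'')) hcard)
  rw [Finset.sum_congr rfl step3]
  have step4 : ∀ l' ∈ Lam r, l' ≠ l →
      (if mfun p l = mfun p l' then (-1 : k) else 0) • tl k r l' = 0 := by
    intro l' hl'' hne
    rw [if_neg, zero_smul]
    intro heq
    apply hne
    refine (digits_inj p hp2 n l' l (fun i => ?_) (fun i => ?_) ?_)
    · have := (mem_Lam.mp hl'') i; have := hr i; omega
    · have := hl' i; have := hr i; omega
    · exact heq.symm
  rw [Finset.sum_eq_single_of_mem l hl step4, if_pos rfl]
  module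

lemma tl_mem_span_ws (r : Fin n → ℕ) (hr : ∀ i, r i ≤ p - 1)
    (hcard : mfun p r ≤ Fintype.card F - 2) (l : Fin n → ℕ) (hl : l ∈ Lam r) :
    tl k r l ∈ Submodule.span k (Set.range (ws F k ι p r)) := by
  have hl' : ∀ i, l i ≤ r i := mem_Lam.mp hl
  have hp2 : 2 ≤ p := (Fact.out : p.Prime).two_le
  have key : ∑ s : F, ι s ^ (Fintype.card F - 1 - mfun p l) • ws F k ι p r s =
      (-(alphaC k r l)) • tl k r l := by
    have hstep : ∀ s : F, ι s ^ (Fintype.card F - 1 - mfun p l) • ws F k ι p r s =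
        ∑ l' ∈ Lam r, (alphaC k r l' *
          ι s ^ (Fintype.card F - 1 - mfun p l + mfun p l')) • tl k r l' := by
      intro s
      rw [ws_expand F k ι p r s, Finset.smul_sum]
      refine Finset.sum_congr rfl fun l' _ => ?_
      rw [smul_smul, pow_add]
      ring_nf
    rw [Finset.sum_congr rfl fun s _ => hstep s, Finset.sum_comm]
    have hterm : ∀ l' ∈ Lam r,
        (∑ s : F, (alphaC k r l' *
          ι s ^ (Fintype.card F - 1 - mfun p l + mfun p l')) • tl k r l') =
        (alphaC k r l' * if mfun p l = mfun p l' then (-1 : k) else 0) • tl k r l' := by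
      intro l' hl''
      rw [← Finset.sum_smul, ← Finset.mul_sum]
      rw [orth F k ι (mfun p l) (mfun p l') (le_trans (mfun_le p hl') hcard)
        (le_trans (mfun_le p (mem_Lam.mp hl'')) hcard)]
    rw [Finset.sum_congr rfl hterm]
    have hz : ∀ l' ∈ Lam r, l' ≠ l →
        (alphaC k r l' * if mfun p l = mfun p l' then (-1 : k) else 0) • tl k r l' = 0 := by
      intro l' hl'' hne
      rw [if_neg, mul_zero, zero_smul]
      intro heq
      apply hne
      refine (digits_inj p hp2 n l' l (fun i => ?_) (fun i => ?_) heq.symm)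
      · have := (mem_Lam.mp hl'') i; have := hr i; omega
      · have := hl' i; have := hr i; omega
    rw [Finset.sum_eq_single_of_mem l hl hz, if_pos rfl]
    ring_nf
  have halpha : alphaC k r l ≠ 0 := alphaC_ne_zero k p r hr l hl'
  have hrepr : tl k r l = (-(alphaC k r l))⁻¹ •
      ∑ s : F, ι s ^ (Fintype.card F - 1 - mfun p l) • ws F k ι p r s := by
    rw [key, smul_smul, inv_mul_cancel₀ (neg_ne_zero.mpr halpha), one_smul]
  rw [hrepr]
  exact Submodule.smul_mem _ _ (Submodule.sum_mem _ fun s _ =>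
    Submodule.smul_mem _ _ (Submodule.subset_span ⟨s, rfl⟩))

lemma span_ws_top (r : Fin n → ℕ) (hr : ∀ i, r i ≤ p - 1)
    (hcard : mfun p r ≤ Fintype.card F - 2) :
    Submodule.span k (Set.range (ws F k ι p r)) = ⊤ := by
  rw [eq_top_iff, ← span_tl_top k r]
  refine Submodule.span_le.2 ?_
  rintro _ ⟨l, hl, rfl⟩
  exact tl_mem_span_ws F k ι p r hr hcard l hl

/-! ### The functions `f_μ₀` -/

open scoped Classical in
def chiv (χ : (Fˣ × Fˣ) →* kˣ) (u v : F) : k :=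
  if h : u ≠ 0 ∧ v ≠ 0 then (χ (Units.mk0 u h.1, Units.mk0 v h.2) : k) else 0

lemma chiv_mul (χ : (Fˣ × Fˣ) →* kˣ) (a d : Fˣ) (u v : F) (hu : u ≠ 0) (hv : v ≠ 0) :
    chiv F k χ ((a : F) * u) ((d : F) * v) = (χ (a, d) : k) * chiv F k χ u v := by
  simp only [chiv]
  rw [dif_pos ⟨mul_ne_zero a.ne_zero hu, mul_ne_zero d.ne_zero hv⟩, dif_pos ⟨hu, hv⟩]
  have hprod : ((a, d) : Fˣ × Fˣ) * (Units.mk0 u hu, Units.mk0 v hv) =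
      (Units.mk0 ((a : F) * u) (mul_ne_zero a.ne_zero hu),
       Units.mk0 ((d : F) * v) (mul_ne_zero d.ne_zero hv)) :=
    Prod.ext (Units.ext rfl) (Units.ext rfl)
  rw [← hprod, MonoidHom.map_mul, Units.val_mul]

lemma chiv_zero (χ : (Fˣ × Fˣ) →* kˣ) (u : F) : chiv F k χ u 0 = 0 := by
  simp only [chiv]
  rw [dif_neg]
  intro h
  exact h.2 rfl

open scoped Classical in
def fmu (χ : (Fˣ × Fˣ) →* kˣ) (μ0 : F) : GL2 F → k := fun g =>
  if ((g : Matrix (Fin 2) (Fin 2) F) 1 1 = μ0 * (g : Matrix (Fin 2) (Fin 2) F) 1 0) then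
    chiv F k χ (((g : Matrix (Fin 2) (Fin 2) F).det) *
      (((g : Matrix (Fin 2) (Fin 2) F) 1 0))⁻¹) ((g : Matrix (Fin 2) (Fin 2) F) 1 0)
  else 0

lemma fmu_mem_Ind (χ : (Fˣ × Fˣ) →* kˣ) (μ0 : F) : fmu F k χ μ0 ∈ Ind F k χ := by
  intro a d c g
  classical
  have e0 := bg_row F a d c g 0
  have e1 := bg_row F a d c g 1
  have edet := bg_det F a d c g
  have hd : (d : F) ≠ 0 := d.ne_zero
  by_cases hcond : (g : Matrix (Fin 2) (Fin 2) F) 1 1 =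
      μ0 * (g : Matrix (Fin 2) (Fin 2) F) 1 0
  · have hcond' : ((bElt F a d c * g : GL2 F) : Matrix (Fin 2) (Fin 2) F) 1 1 =
        μ0 * ((bElt F a d c * g : GL2 F) : Matrix (Fin 2) (Fin 2) F) 1 0 := by
      rw [e0, e1, hcond]; ring
    simp only [fmu]
    rw [if_pos hcond', if_pos hcond]
    by_cases hg0 : (g : Matrix (Fin 2) (Fin 2) F) 1 0 = 0
    · rw [e0, hg0, mul_zero, chiv_zero, chiv_zero, mul_zero]
    · have harg1 : ((bElt F a d c * g : GL2 F) : Matrix (Fin 2) (Fin 2) F).det *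
          (((bElt F a d c * g : GL2 F) : Matrix (Fin 2) (Fin 2) F) 1 0)⁻¹ =
          (a : F) * (((g : Matrix (Fin 2) (Fin 2) F)).det *
            (((g : Matrix (Fin 2) (Fin 2) F)) 1 0)⁻¹) := by
        rw [edet, e0]
        field_simp
      have harg2 : ((bElt F a d c * g : GL2 F) : Matrix (Fin 2) (Fin 2) F) 1 0 =
          (d : F) * ((g : Matrix (Fin 2) (Fin 2) F)) 1 0 := e0
      rw [harg1, harg2,
        chiv_mul F k χ a d _ _ (mul_ne_zero (det_ne_zero F g) (inv_ne_zero hg0)) hg0]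
  · have hcond' : ¬ (((bElt F a d c * g : GL2 F) : Matrix (Fin 2) (Fin 2) F) 1 1 =
        μ0 * ((bElt F a d c * g : GL2 F) : Matrix (Fin 2) (Fin 2) F) 1 0) := by
      rw [e0, e1]
      intro h
      apply hcond
      apply mul_left_cancel₀ hd
      rw [h]; ring
    simp only [fmu]
    rw [if_neg hcond', if_neg hcond, mul_zero]

lemma fmu_one (χ : (Fˣ × Fˣ) →* kˣ) (μ0 : F) : fmu F k χ μ0 1 = 0 := by
  classical
  have h1 : ((1 : GL2 F) : Matrix (Fin 2) (Fin 2) F) = 1 := rfl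
  simp only [fmu, h1]
  rw [if_neg]
  simp [Matrix.one_apply]

lemma fmu_w_self (χ : (Fˣ × Fˣ) →* kˣ) (μ0 : F) :
    fmu F k χ μ0 (nsElt F * uElt F μ0) = 1 := by
  classical
  have e0 : ((nsElt F * uElt F μ0 : GL2 F) : Matrix (Fin 2) (Fin 2) F) 1 0 = 1 := by
    rw [w_val]; rfl
  have e1 : ((nsElt F * uElt F μ0 : GL2 F) : Matrix (Fin 2) (Fin 2) F) 1 1 = μ0 := by
    rw [w_val]; rfl
  have edet := w_det F μ0
  simp only [fmu, chiv]
  rw [if_pos (by rw [e0, e1, mul_one]), e0, edet]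
  rw [dif_pos ⟨by norm_num, one_ne_zero⟩]
  have hpair : ((Units.mk0 ((1 : F) * (1 : F)⁻¹) (by norm_num),
      Units.mk0 (1 : F) one_ne_zero) : Fˣ × Fˣ) = 1 := by
    refine Prod.ext (Units.ext ?_) (Units.ext ?_) <;> norm_num
  rw [hpair]
  simp

lemma fmu_w_ne (χ : (Fˣ × Fˣ) →* kˣ) (μ0 s : F) (hs : s ≠ μ0) :
    fmu F k χ μ0 (nsElt F * uElt F s) = 0 := by
  classical
  have e0 : ((nsElt F * uElt F s : GL2 F) : Matrix (Fin 2) (Fin 2) F) 1 0 = 1 := by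
    rw [w_val]; rfl
  have e1 : ((nsElt F * uElt F s : GL2 F) : Matrix (Fin 2) (Fin 2) F) 1 1 = s := by
    rw [w_val]; rfl
  simp only [fmu]
  rw [if_neg (by rw [e0, e1, mul_one]; exact hs)]

/-! ### The comparison map on `Ind χ` -/

def Vfun (r : Fin n → ℕ) (f : GL2 F → k) : ⨂[k] i : Fin n, ↥(Vd k (r i)) :=
  f 1 • tl k r r + ∑ s : F, f (nsElt F * uElt F s) • ws F k ι p r s

lemma Vfun_fmu (r : Fin n → ℕ) (χ : (Fˣ × Fˣ) →* kˣ) (μ0 : F) :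
    Vfun F k ι p r (fmu F k χ μ0) = ws F k ι p r μ0 := by
  classical
  rw [Vfun, fmu_one, zero_smul, zero_add]
  rw [Finset.sum_eq_single_of_mem μ0 (Finset.mem_univ _)]
  · rw [fmu_w_self, one_smul]
  · intro s _ hne
    rw [fmu_w_ne F k χ μ0 s hne, zero_smul]

lemma psi_Vfun_apply (A : ℕ) (r : Fin n → ℕ) (f : GL2 F → k) (x : GL2 F) :
    psi F k ι p A r (Vfun F k ι p r f) x =
      f 1 * psi F k ι p A r (tl k r r) x +
        ∑ s : F, f (nsElt F * uElt F s) * psi F k ι p A r (ws F k ι p r s) x := by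
  rw [Vfun, map_add, map_sum]
  simp only [LinearMap.map_smul, Pi.add_apply, Finset.sum_apply, Pi.smul_apply, smul_eq_mul]

/-! ### Cocycle property of `ψ` and the main identity -/

lemma psi_Ind (A : ℕ) (r : Fin n → ℕ) (v : ⨂[k] i : Fin n, ↥(Vd k (r i)))
    (a d : Fˣ) (cc : F) (g : GL2 F) :
    psi F k ι p A r v (bElt F a d cc * g) =
      (ι ((a : F)) ^ A * ι ((d : F)) ^ A * ι ((d : F)) ^ mfun p r) *
        psi F k ι p A r v g := by
  have hmaps : (LinearMap.proj (bElt F a d cc * g) ∘ₗ psi F k ι p A r)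
      = (ι ((a : F)) ^ A * ι ((d : F)) ^ A * ι ((d : F)) ^ mfun p r) •
        (LinearMap.proj g ∘ₗ psi F k ι p A r) := by
    apply LinearMap.ext_on (span_tl_top k r)
    rintro _ ⟨l, hl, rfl⟩
    have hl' : ∀ i, l i ≤ r i := mem_Lam.mp (Finset.mem_coe.mp hl)
    simp only [LinearMap.comp_apply, LinearMap.smul_apply, LinearMap.proj_apply, smul_eq_mul]
    rw [psi_tl_apply F k ι p A r l hl', psi_tl_apply F k ι p A r l hl',
      bg_det F a d cc g, bg_row F a d cc g 0, bg_row F a d cc g 1,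
      mfun_sub p hl']
    have hle : mfun p l ≤ mfun p r := mfun_le p hl'
    have hd2 : ι ((d : F)) ^ mfun p l * ι ((d : F)) ^ (mfun p r - mfun p l) =
        ι ((d : F)) ^ mfun p r := by
      rw [← pow_add, Nat.add_sub_cancel' hle]
    simp only [_root_.map_mul, mul_pow]
    rw [← hd2]
    ring
  have := LinearMap.congr_fun hmaps v
  simpa using this

lemma mfun_self_sub (r : Fin n → ℕ) : mfun p (fun i => r i - r i) = 0 := by
  show (∑ i, (r i - r i) * p ^ (i : ℕ)) = 0
  simp

lemma T_eq_psi (χ : (Fˣ × Fˣ) →* kˣ) (A : ℕ) (r : Fin n → ℕ)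
    (hχa : ∀ lam : Fˣ, (χ (1, lam) : k) = ι (lam : F) ^ A)
    (hχr : ∀ lam : Fˣ, (χ (lam, lam⁻¹) : k) = ι (lam : F) ^ mfun p r)
    (hrr1 : 1 ≤ mfun p r)
    (f : GL2 F → k) (hf : f ∈ Ind F k χ) :
    heckeT F k f = psi F k ι p A r (Vfun F k ι p r f) := by
  have hrne0 : mfun p r ≠ 0 := by omega
  refine bruhat_ext F k _ _ (fun a d => (χ (d, a) : k)) ?_ ?_ ?_ ?_
  · exact fun a d cc g => heckeT_Ind_cocycle F k χ f hf a d cc g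
  · intro a d cc g
    rw [psi_Ind F k ι p A r _ a d cc g]
    congr 1
    show ι ((a : F)) ^ A * ι ((d : F)) ^ A * ι ((d : F)) ^ mfun p r = (χ (d, a) : k)
    have hsplit : ((d, a) : Fˣ × Fˣ) = (d, d⁻¹) * (1, d * a) := by
      refine Prod.ext (Units.ext ?_) (Units.ext ?_)
      · simp
      · simp
    rw [hsplit, MonoidHom.map_mul, Units.val_mul, hχr d, hχa (d * a), Units.val_mul,
      _root_.map_mul]
    ring
  · rw [heckeT_Ind_one F k χ f hf, psi_Vfun_apply,
      psi_tl_one F k ι p A r r (fun i => le_refl _) hrne0, mul_zero, zero_add,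
      Finset.mul_sum]
    refine Finset.sum_congr rfl fun s _ => ?_
    rw [psi_ws_one F k ι p A r s]
    have hχm : (χ (-1, -1) : k) = ∏ i, (-1 : k) ^ r i := by
      have hinv : ((-1 : Fˣ))⁻¹ = -1 := by simp
      have hv := hχr (-1)
      rw [hinv] at hv
      rw [hv]
      have : (ι ((-1 : Fˣ) : F)) = -1 := by
        rw [Units.val_neg, Units.val_one, map_neg, _root_.map_one]
      rw [this, neg_one_pow_mfun]
    rw [hχm]
    ring
  · intro μ
    rw [heckeT_Ind_w F k ι χ (mfun p r) hrr1 hχr f hf μ, psi_Vfun_apply,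
      psi_tl_w F k ι p A r r (fun i => le_refl _) μ, mfun_self_sub, pow_zero, mul_one]
    congr 1
    refine Finset.sum_congr rfl fun s _ => ?_
    rw [psi_ws_w F k ι p A r s μ]
    ring

/-! ### Equivariance of `ψ` -/

lemma aeval_VdRep (d : ℕ) (h : GL2 F) (P : ↥(Vd k d)) (pt0 : Fin 2 → k) :
    MvPolynomial.aeval pt0 ((VdRep F k ι d h P : MvPolynomial (Fin 2) k)) =
      MvPolynomial.aeval (fun j => MvPolynomial.aeval pt0 (subMat F k ι h j))
        ((P : MvPolynomial (Fin 2) k)) := by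
  have hval : ((VdRep F k ι d h P : MvPolynomial (Fin 2) k)) =
      MvPolynomial.aeval (subMat F k ι h) ((P : MvPolynomial (Fin 2) k)) := rfl
  rw [hval]
  have hcomp : (MvPolynomial.aeval (R := k) pt0).comp
      (MvPolynomial.aeval (subMat F k ι h)) =
      MvPolynomial.aeval (fun j => MvPolynomial.aeval pt0 (subMat F k ι h j)) := by
    rw [MvPolynomial.comp_aeval]
  exact (AlgHom.congr_fun hcomp ((P : MvPolynomial (Fin 2) k))).symm ▸ rfl

lemma pt_mul (g x : GL2 F) (i : ℕ) :
    (fun j => MvPolynomial.aeval (pt F k ι p x i) (subMat F k ι (frobGL F p i g) j)) =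
      pt F k ι p (x * g) i := by
  funext j
  simp only [subMat, Fin.sum_univ_two, map_add, _root_.map_mul, MvPolynomial.aeval_C,
    MvPolynomial.aeval_X, Algebra.algebraMap_self, RingHom.id_apply]
  have hent : ∀ (m : Fin 2), ((frobGL F p i g : GL2 F) : Matrix (Fin 2) (Fin 2) F) m j =
      ((g : Matrix (Fin 2) (Fin 2) F) m j) ^ p ^ i := by
    intro m
    simp [frobGL, Matrix.GeneralLinearGroup.map_apply, iterateFrobenius_def]
  rw [hent 0, hent 1, map_pow ι, map_pow ι]
  show ι ((g : Matrix (Fin 2) (Fin 2) F) 0 j) ^ p ^ i *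
      (ι ((x : Matrix (Fin 2) (Fin 2) F) 1 0) ^ p ^ i) +
    ι ((g : Matrix (Fin 2) (Fin 2) F) 1 j) ^ p ^ i *
      (ι ((x : Matrix (Fin 2) (Fin 2) F) 1 1) ^ p ^ i) =
    ι (((x * g : GL2 F) : Matrix (Fin 2) (Fin 2) F) 1 j) ^ p ^ i
  have hmul : ((x * g : GL2 F) : Matrix (Fin 2) (Fin 2) F) 1 j =
      (x : Matrix (Fin 2) (Fin 2) F) 1 0 * (g : Matrix (Fin 2) (Fin 2) F) 0 j +
      (x : Matrix (Fin 2) (Fin 2) F) 1 1 * (g : Matrix (Fin 2) (Fin 2) F) 1 j := by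
    show ((x : Matrix (Fin 2) (Fin 2) F) * (g : Matrix (Fin 2) (Fin 2) F)) 1 j = _
    rw [Matrix.mul_apply, Fin.sum_univ_two]
  rw [hmul, map_add ι, _root_.map_mul ι, _root_.map_mul ι, add_pow_char_pow (R := k)]
  ring

lemma targetRep_tprod (r : Fin n → ℕ) (g : GL2 F) (P : Π i : Fin n, ↥(Vd k (r i))) :
    targetRep F k ι p r g (PiTensorProduct.tprod k P) =
      PiTensorProduct.tprod k (fun i => (VdRep F k ι (r i)) (frobGL F p (i : ℕ) g) (P i)) := by
  show piRep k (fun i => ((VdRep F k ι (r i)).comp (frobGL F p (i : ℕ)))) g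
      (PiTensorProduct.tprod k P) = _
  simp only [piRep, MonoidHom.coe_mk, OneHom.coe_mk, PiTensorProduct.map_tprod]
  rfl

lemma psi_equivariant (A : ℕ) (r : Fin n → ℕ) (g : GL2 F)
    (v : ⨂[k] i : Fin n, ↥(Vd k (r i))) :
    rt F k g (psi F k ι p A r v) =
      ι (((Matrix.GeneralLinearGroup.det g : Fˣ) : F)) ^ A •
        psi F k ι p A r (targetRep F k ι p r g v) := by
  have key : ∀ (P : Π i : Fin n, ↥(Vd k (r i))),
      rt F k g (psi F k ι p A r (PiTensorProduct.tprod k P)) =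
        ι ((g : Matrix (Fin 2) (Fin 2) F).det) ^ A •
          psi F k ι p A r (targetRep F k ι p r g (PiTensorProduct.tprod k P)) := by
    intro P
    rw [targetRep_tprod F k ι p r g P]
    funext x
    have hrt : rt F k g (psi F k ι p A r (PiTensorProduct.tprod k P)) x =
        psi F k ι p A r (PiTensorProduct.tprod k P) (x * g) := rfl
    rw [hrt, psi_tprod]
    have hsm : (ι ((g : Matrix (Fin 2) (Fin 2) F).det) ^ A •
        psi F k ι p A r (PiTensorProduct.tprod k
          (fun i => (VdRep F k ι (r i)) (frobGL F p (i : ℕ) g) (P i)))) x =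
        ι ((g : Matrix (Fin 2) (Fin 2) F).det) ^ A *
          psi F k ι p A r (PiTensorProduct.tprod k
            (fun i => (VdRep F k ι (r i)) (frobGL F p (i : ℕ) g) (P i))) x := rfl
    rw [hsm, psi_tprod]
    have hfac : ∀ i : Fin n,
        MvPolynomial.aeval (pt F k ι p x ((i : Fin n) : ℕ))
          (((VdRep F k ι (r i)) (frobGL F p (i : ℕ) g) (P i) : MvPolynomial (Fin 2) k)) =
        MvPolynomial.aeval (pt F k ι p (x * g) ((i : Fin n) : ℕ))
          ((P i : MvPolynomial (Fin 2) k)) := by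
      intro i
      rw [aeval_VdRep F k ι (r i) (frobGL F p (i : ℕ) g) (P i) (pt F k ι p x (i : ℕ)),
        pt_mul F k ι p g x (i : ℕ)]
    rw [Finset.prod_congr rfl fun i _ => hfac i]
    have hdet2 : ((x * g : GL2 F) : Matrix (Fin 2) (Fin 2) F).det =
        (x : Matrix (Fin 2) (Fin 2) F).det * (g : Matrix (Fin 2) (Fin 2) F).det := by
      show ((x : Matrix (Fin 2) (Fin 2) F) * (g : Matrix (Fin 2) (Fin 2) F)).det = _
      rw [Matrix.det_mul]
    rw [hdet2, _root_.map_mul ι, mul_pow]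
    ring
  have h2 : (((rt F k g : (GL2 F → k) →ₗ[k] (GL2 F → k))).comp (psi F k ι p A r)) =
      (ι ((g : Matrix (Fin 2) (Fin 2) F).det) ^ A •
        ((psi F k ι p A r).comp (targetRep F k ι p r g : _ →ₗ[k] _))) := by
    apply PiTensorProduct.ext
    apply MultilinearMap.ext
    intro P
    simp only [LinearMap.compMultilinearMap_apply, LinearMap.comp_apply, LinearMap.smul_apply]
    exact key P
  have h3 := LinearMap.congr_fun h2 v
  simp only [LinearMap.comp_apply, LinearMap.smul_apply] at h3
  rw [Matrix.GeneralLinearGroup.val_det_apply]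
  exact h3

/-! ### `rt` commutes with the Hecke operator -/

lemma rt_heckeT (g : GL2 F) (f : GL2 F → k) :
    heckeT F k (rt F k g f) = rt F k g (heckeT F k f) := by
  funext x
  have h1 : heckeT F k (rt F k g f) x = ∑ c : F, f ((nsElt F)⁻¹ * uElt F c * x * g) := rfl
  have h2 : rt F k g (heckeT F k f) x = ∑ c : F, f ((nsElt F)⁻¹ * uElt F c * (x * g)) := rfl
  rw [h1, h2]
  exact Finset.sum_congr rfl fun c _ => by rw [mul_assoc]

lemma rt_Ind (χ : (Fˣ × Fˣ) →* kˣ) (g : GL2 F) (f : GL2 F → k) (hf : f ∈ Ind F k χ) :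
    rt F k g f ∈ Ind F k χ := by
  intro a d c x
  have h1 : rt F k g f (bElt F a d c * x) = f (bElt F a d c * x * g) := rfl
  have h2 : rt F k g f x = f (x * g) := rfl
  rw [h1, h2, mul_assoc]
  exact hf a d c (x * g)

end Helpers

end S17

/-- if `χ` corresponds to the integers `a` and `r = r₀ + r₁ p + ⋯`
(with `r ≠ q - 1`, i.e. `χ ≠ χ^s`), then
`Im (T_{n_s} : Ind_B^Γ χ → Ind_B^Γ χ^s) ≅ (⨂ᵢ V_{rᵢ}^{Fr^i}) ⊗ det^a` as `k[Γ]`-modules. -/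
theorem stmt_17 (hn : 1 ≤ n) (hF : Fintype.card F = p ^ n)
    [IsAlgClosed k] [CharP k p]
    (χ : (Fˣ × Fˣ) →* kˣ)
    (a : ℕ) (ha1 : 1 ≤ a) (ha2 : a ≤ p ^ n - 1)
    (hχa : ∀ lam : Fˣ, (χ (1, lam) : k) = ι (lam : F) ^ a)
    (rr : ℕ) (hrr1 : 1 ≤ rr) (hrr2 : rr ≤ p ^ n - 1)
    (hχr : ∀ lam : Fˣ, (χ (lam, lam⁻¹) : k) = ι (lam : F) ^ rr)
    (hrne : rr ≠ p ^ n - 1)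
    (r : Fin n → ℕ) (hr : ∀ i, r i ≤ p - 1)
    (hdig : ∑ i : Fin n, r i * p ^ (i : ℕ) = rr) :
    -- `Im T_{n_s}` is a `k[Γ]`-submodule of the function space …
    (∀ (g : GL2 F), ∀ f ∈ Submodule.map (heckeT F k) (Ind F k χ),
      rt F k g f ∈ Submodule.map (heckeT F k) (Ind F k χ)) ∧
    -- … isomorphic to `(⨂ᵢ V_{rᵢ}^{Fr^i}) ⊗ det^a` as a `k[Γ]`-module
    (∃ e : (GL2 F → k) →ₗ[k] (⨂[k] i : Fin n, ↥(Vd k (r i))),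
      (∀ (g : GL2 F), ∀ f ∈ Submodule.map (heckeT F k) (Ind F k χ),
        e (rt F k g f) =
          ι (((Matrix.GeneralLinearGroup.det g : Fˣ) : F)) ^ a •
            targetRep F k ι p r g (e f)) ∧
      (∀ f ∈ Submodule.map (heckeT F k) (Ind F k χ), e f = 0 → f = 0) ∧
      Submodule.map e (Submodule.map (heckeT F k) (Ind F k χ)) = ⊤) := by
  classical
  have hp2 : 2 ≤ p := (Fact.out : p.Prime).two_le
  have hcard2 : S17.mfun p r ≤ Fintype.card F - 2 := by
    have hmf : S17.mfun p r = rr := hdig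
    have hpn : 2 ≤ p ^ n := by
      calc 2 ≤ p := hp2
      _ = p ^ 1 := (pow_one p).symm
      _ ≤ p ^ n := Nat.pow_le_pow_right (by omega) hn
    rw [hmf, hF]
    omega
  have hrr1' : 1 ≤ S17.mfun p r := by
    have hmf : S17.mfun p r = rr := hdig
    omega
  have hχr' : ∀ lam : Fˣ, (χ (lam, lam⁻¹) : k) = ι (lam : F) ^ S17.mfun p r := by
    intro lam
    have hmf : S17.mfun p r = rr := hdig
    rw [hmf]
    exact hχr lam
  set N := Fintype.card F - 1 - S17.mfun p r with hN
  -- `E ∘ ψ = id`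
  have hEL : ∀ v : ⨂[k] i : Fin n, ↥(Vd k (r i)),
      S17.EL F k ι p r N (S17.psi F k ι p a r v) = v := by
    have hcomp : (S17.EL F k ι p r N) ∘ₗ (S17.psi F k ι p a r) = LinearMap.id := by
      apply LinearMap.ext_on (S17.span_tl_top k r)
      rintro _ ⟨l, hl, rfl⟩
      simp only [LinearMap.comp_apply, LinearMap.id_apply]
      exact S17.EL_psi_tl F k ι p a r hr hcard2 l (Finset.mem_coe.mp hl)
    intro v
    have := LinearMap.congr_fun hcomp v
    simpa using this
  have hT : ∀ f ∈ Ind F k χ, heckeT F k f = S17.psi F k ι p a r (S17.Vfun F k ι p r f) :=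
    fun f hf => S17.T_eq_psi F k ι p χ a r hχa hχr' hrr1' f hf
  constructor
  · intro g f hf
    obtain ⟨f₀, hf₀, rfl⟩ := hf
    exact ⟨rt F k g f₀, S17.rt_Ind F k χ g f₀ hf₀, S17.rt_heckeT F k g f₀⟩
  · refine ⟨S17.EL F k ι p r N, ?_, ?_, ?_⟩
    · intro g f hf
      obtain ⟨f₀, hf₀, rfl⟩ := hf
      rw [hT f₀ hf₀, S17.psi_equivariant F k ι p a r g (S17.Vfun F k ι p r f₀),
        LinearMap.map_smul, hEL, hEL]
    · intro f hf hEf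
      obtain ⟨f₀, hf₀, rfl⟩ := hf
      rw [hT f₀ hf₀] at hEf ⊢
      rw [hEL] at hEf
      rw [hEf, map_zero]
    · have hws : ∀ s : F, S17.ws F k ι p r s ∈
          Submodule.map (S17.EL F k ι p r N) (Submodule.map (heckeT F k) (Ind F k χ)) := by
        intro s
        refine ⟨heckeT F k (S17.fmu F k χ s),
          ⟨S17.fmu F k χ s, S17.fmu_mem_Ind F k χ s, rfl⟩, ?_⟩
        rw [hT (S17.fmu F k χ s) (S17.fmu_mem_Ind F k χ s), hEL,
          S17.Vfun_fmu F k ι p r χ s]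
      rw [eq_top_iff, ← S17.span_ws_top F k ι p r hr hcard2]
      refine Submodule.span_le.2 ?_
      rintro _ ⟨s, rfl⟩
      exact hws s


end
end
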